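/- There is no non-degenerate naturally graded filiform Lie superalgebra g = g₀ ⊕ g₁ over ℂ with dim g₀ = n+1 and dim g₁ = m satisfying n > 2m. -/
import Mathlib


/-- The sign `(-1)^(i·j)` for parities `i j : ZMod 2`, as a complex scalar. -/
def ssign (i j : ZMod 2) : ℂ := if i = 1 ∧ j = 1 then -1 else 1

/-- A (complex) Lie superalgebra structure on the vector space `V`: a ℤ₂-grading
`g` whose parts are complementary, together with an even bilinear bracket which is
super skew-symmetric and satisfies the super Jacobi identity on homogeneous elements. -/
structure LieSuperAlg (V : Type*) [AddCommGroup V] [Module ℂ V] where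
  g : ZMod 2 → Submodule ℂ V
  bk : V →ₗ[ℂ] V →ₗ[ℂ] V
  compl : IsCompl (g 0) (g 1)
  grading : ∀ i j : ZMod 2, ∀ x ∈ g i, ∀ y ∈ g j, bk x y ∈ g (i + j)
  skew : ∀ i j : ZMod 2, ∀ x ∈ g i, ∀ y ∈ g j, bk x y = -(ssign i j • bk y x)
  jacobi : ∀ i j k : ZMod 2, ∀ x ∈ g i, ∀ y ∈ g j, ∀ z ∈ g k,
    ssign k i • bk x (bk y z) + ssign i j • bk y (bk z x) + ssign j k • bk z (bk x y) = 0

namespace LieSuperAlg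

variable {V : Type*} [AddCommGroup V] [Module ℂ V]

/-- The descending sequences `C⁰(g_i) = g_i`, `C^{k+1}(g_i) = [g₀, C^k(g_i)]`. -/
def C (A : LieSuperAlg V) (i : ZMod 2) : ℕ → Submodule ℂ V
  | 0 => A.g i
  | k + 1 => Submodule.span ℂ {z | ∃ x ∈ A.g 0, ∃ y ∈ C A i k, z = A.bk x y}

/-- The descending central sequence of the whole superalgebra. -/
def DC (A : LieSuperAlg V) : ℕ → Submodule ℂ V
  | 0 => ⊤
  | k + 1 => Submodule.span ℂ {z | ∃ x ∈ DC A k, ∃ y : V, z = A.bk x y}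

/-- Nilpotency: the descending central sequence reaches zero. -/
def IsNilpotent (A : LieSuperAlg V) : Prop := ∃ k, A.DC k = ⊥

/-- `A` is filiform with parameters `(n, m)`: it is nilpotent, `dim g₀ = n + 1`,
`dim g₁ = m`, and the super-nilindex is `(n, m)` (the maximal one). -/
def IsFiliform (A : LieSuperAlg V) (n m : ℕ) : Prop :=
  A.IsNilpotent ∧ Module.finrank ℂ (A.g 0) = n + 1 ∧ Module.finrank ℂ (A.g 1) = m ∧
    A.C 0 (n - 1) ≠ ⊥ ∧ A.C 1 (m - 1) ≠ ⊥ ∧ A.C 0 n = ⊥ ∧ A.C 1 m = ⊥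

/-- Non-degeneracy: the bracket does not vanish identically on `g₁ × g₁`. -/
def NonDegenerate (A : LieSuperAlg V) : Prop :=
  ∃ x ∈ A.g 1, ∃ y ∈ A.g 1, A.bk x y ≠ 0

/-- `A` is naturally graded: there are subspaces `W a i` (`i ≥ 1`, parity `a`), splitting
the filtrations `C` (so that `W a i ≅ C^{i-1}(g_a)/C^i(g_a)` and `g ≅ gr(g)` in the
natural way) and compatible with the bracket (so `gr(g)` is a graded Lie superalgebra,
`[gⁱ, gʲ] ⊆ g^{i+j}`).  For finite-dimensional nilpotent superalgebras this is
equivalent to the textbook definition `g ≅ gr(g)` with `gr(g)` graded. -/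
def NaturallyGraded (A : LieSuperAlg V) : Prop :=
  ∃ W : ZMod 2 → ℕ → Submodule ℂ V,
    (∀ a, W a 0 = ⊥) ∧
    (∀ a k, A.C a k = W a (k + 1) ⊔ A.C a (k + 1)) ∧
    (∀ a k, W a (k + 1) ⊓ A.C a (k + 1) = ⊥) ∧
    (∀ a b : ZMod 2, ∀ i j : ℕ, ∀ x ∈ W a i, ∀ y ∈ W b j, A.bk x y ∈ W (a + b) (i + j))

/-- `X 0, …, X n` and `Y 1, …, Y m` form an adapted basis of the superalgebra:
the `X i` are even, the `Y j` are odd, and together they form a basis of `V`. -/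
def IsAdaptedBasis (A : LieSuperAlg V) (n m : ℕ) (X Y : ℕ → V) : Prop :=
  (∀ i, i ≤ n → X i ∈ A.g 0) ∧ (∀ j, 1 ≤ j → j ≤ m → Y j ∈ A.g 1) ∧
  LinearIndependent ℂ
    (Sum.elim (fun i : Fin (n + 1) => X i.val) (fun j : Fin m => Y (j.val + 1))) ∧
  Submodule.span ℂ
    (Set.range (Sum.elim (fun i : Fin (n + 1) => X i.val) (fun j : Fin m => Y (j.val + 1)))) = ⊤

end LieSuperAlg


namespace LieSuperAlg

variable {V : Type*} [AddCommGroup V] [Module ℂ V]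

lemma C_zero (A : LieSuperAlg V) (a : ZMod 2) : A.C a 0 = A.g a := rfl

lemma C_succ (A : LieSuperAlg V) (a : ZMod 2) (k : ℕ) :
    A.C a (k+1) = Submodule.span ℂ {z | ∃ x ∈ A.g 0, ∃ y ∈ A.C a k, z = A.bk x y} := rfl

section aux

variable (A : LieSuperAlg V) (W : ZMod 2 → ℕ → Submodule ℂ V)
  (hdec : ∀ a k, A.C a k = W a (k + 1) ⊔ A.C a (k + 1))

include hdec

lemma C_succ_le (a : ZMod 2) (k : ℕ) : A.C a (k+1) ≤ A.C a k := by
  rw [hdec a k]; exact le_sup_right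

lemma C_anti (a : ZMod 2) {j k : ℕ} (h : j ≤ k) : A.C a k ≤ A.C a j := by
  induction k, h using Nat.le_induction with
  | base => exact le_rfl
  | succ k hk ih => exact le_trans (C_succ_le A W hdec a k) ih

lemma W_le_C (a : ZMod 2) (k : ℕ) : W a (k+1) ≤ A.C a k := by
  rw [hdec a k]; exact le_sup_left

lemma W_le_g (hW0 : ∀ a, W a 0 = ⊥) (a : ZMod 2) (k : ℕ) : W a k ≤ A.g a := by
  cases k with
  | zero => rw [hW0 a]; exact bot_le
  | succ k =>
    exact le_trans (W_le_C A W hdec a k) (le_trans (C_anti A W hdec a (Nat.zero_le k)) (le_of_eq (C_zero A a)))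

omit hdec in
lemma C_stab (a : ZMod 2) (k : ℕ) (hk : A.C a (k+1) = A.C a k) :
    ∀ d, A.C a (k+d) = A.C a k := by
  intro d
  induction d with
  | zero => rfl
  | succ d ih => rw [show k + (d+1) = (k+d) + 1 from rfl, C_succ, ih, ← C_succ, hk]

lemma C_le_of_W_le (a : ZMod 2) (N k : ℕ) (hCN : A.C a N = ⊥) (hkN : k ≤ N)
    (M : Submodule ℂ V) (hW : ∀ t, k < t → W a t ≤ M) : A.C a k ≤ M := by
  have key : ∀ d, k ≤ N - d → A.C a (N - d) ≤ M := by
    intro d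
    induction d with
    | zero => intro _; rw [Nat.sub_zero, hCN]; exact bot_le
    | succ d ih =>
      intro hk
      by_cases hd : N ≤ d
      · rw [show N - (d+1) = N - d by omega]; exact ih (by omega)
      · have e : N - d = (N - (d+1)) + 1 := by omega
        have h2 := hdec a (N - (d+1))
        rw [← e] at h2
        rw [h2]
        exact sup_le (hW (N - d) (by omega)) (ih (by omega))
  have h := key (N - k) (by omega)
  rwa [show N - (N - k) = k by omega] at h

lemma finrank_C [FiniteDimensional ℂ V]
    (hdisj : ∀ a k, W a (k + 1) ⊓ A.C a (k + 1) = ⊥) (a : ZMod 2) (K : ℕ) :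
    Module.finrank ℂ (A.C a 0) =
      (∑ i ∈ Finset.range K, Module.finrank ℂ (W a (i+1))) + Module.finrank ℂ (A.C a K) := by
  induction K with
  | zero => simp
  | succ K ih =>
    have h := Submodule.finrank_sup_add_finrank_inf_eq (W a (K+1)) (A.C a (K+1))
    rw [hdisj a K, finrank_bot, ← hdec a K] at h
    rw [ih, Finset.sum_range_succ]
    omega

lemma gen (hbr : ∀ a b : ZMod 2, ∀ i j : ℕ, ∀ x ∈ W a i, ∀ y ∈ W b j, A.bk x y ∈ W (a + b) (i + j))
    (N s : ℕ) (hCN : A.C 0 N = ⊥) (hs : 1 ≤ s) (hsN : s ≤ N) :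
    A.C 0 s ≤ Submodule.span ℂ {z | ∃ x ∈ W 0 1, ∃ w ∈ W 0 s, z = A.bk x w} ⊔ A.C 0 (s+1) := by
  obtain ⟨r, rfl⟩ : ∃ r, s = r + 1 := ⟨s - 1, by omega⟩
  set D := Submodule.span ℂ {z | ∃ x ∈ W 0 1, ∃ w ∈ W 0 (r+1), z = A.bk x w} ⊔ A.C 0 (r+2)
    with hD
  have claimA : ∀ i t, 1 ≤ i → r + 1 ≤ t → ∀ x ∈ W 0 i, ∀ w ∈ W 0 t, A.bk x w ∈ D := by
    intro i t hi ht x hx w hw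
    by_cases hcase : i = 1 ∧ t = r + 1
    · obtain ⟨rfl, rfl⟩ := hcase
      exact Submodule.mem_sup_left (Submodule.subset_span ⟨x, hx, w, hw, rfl⟩)
    · have hit : r + 3 ≤ i + t := by omega
      have h1 : A.bk x w ∈ W 0 (i + t) := by
        have := hbr 0 0 i t x hx w hw
        rwa [show ((0:ZMod 2) + 0) = 0 by decide] at this
      have h2 : W 0 (i + t) ≤ A.C 0 (i + t - 1) := by
        have := W_le_C A W hdec 0 (i + t - 1)
        rwa [show i + t - 1 + 1 = i + t by omega] at this
      have h3 : A.C 0 (i + t - 1) ≤ A.C 0 (r+2) := C_anti A W hdec 0 (by omega)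
      exact Submodule.mem_sup_right (h3 (h2 h1))
  have claimB : ∀ t, r + 1 ≤ t → ∀ w ∈ W 0 t, ∀ x ∈ A.g 0, A.bk x w ∈ D := by
    intro t ht w hw x hx
    have hle : A.C 0 0 ≤ Submodule.comap (A.bk.flip w) D := by
      refine C_le_of_W_le A W hdec 0 N 0 hCN (Nat.zero_le N) _ ?_
      intro i hi x' hx'
      exact Submodule.mem_comap.mpr (by simpa using claimA i t hi ht x' hx' w hw)
    simpa using Submodule.mem_comap.mp (hle hx)
  rw [C_succ]
  refine Submodule.span_le.2 ?_
  rintro z ⟨x, hx, y, hy, rfl⟩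
  have hle : A.C 0 r ≤ Submodule.comap (A.bk x) D := by
    refine C_le_of_W_le A W hdec 0 N r hCN (by omega) _ ?_
    intro t ht w hw
    exact Submodule.mem_comap.mpr (claimB t ht w hw x hx)
  exact Submodule.mem_comap.mp (hle hy)

end aux

section jac
variable (A : LieSuperAlg V)

lemma bk_self (x : V) (hx : x ∈ A.g 0) : A.bk x x = 0 := by
  have h := A.skew 0 0 x hx x hx
  rw [show ssign 0 0 = 1 from rfl, one_smul] at h
  have h3 : (2:ℂ) • A.bk x x = 0 := by
    rw [two_smul]; nth_rewrite 1 [h]; abel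
  simpa using (smul_eq_zero.mp h3).resolve_left (by norm_num)

lemma jacobi_oo (x y z : V) (hx : x ∈ A.g 0) (hy : y ∈ A.g 1) (hz : z ∈ A.g 1) :
    A.bk x (A.bk y z) = A.bk (A.bk x y) z + A.bk y (A.bk x z) := by
  have j := A.jacobi 0 1 1 x hx y hy z hz
  rw [show ssign 1 0 = 1 from rfl, show ssign 0 1 = 1 from rfl,
    show ssign 1 1 = (-1:ℂ) from rfl, one_smul, one_smul] at j
  have s1 : A.bk z x = -(A.bk x z) := by
    have := A.skew 1 0 z hz x hx
    rwa [show ssign 1 0 = 1 from rfl, one_smul] at this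
  have hxy : A.bk x y ∈ A.g 1 := by
    have := A.grading 0 1 x hx y hy
    rwa [show ((0:ZMod 2) + 1) = 1 by decide] at this
  have s2 : A.bk z (A.bk x y) = A.bk (A.bk x y) z := by
    have := A.skew 1 1 z hz (A.bk x y) hxy
    rw [show ssign 1 1 = (-1:ℂ) from rfl] at this
    rw [this]; module
  rw [s1, s2, map_neg] at j
  have : A.bk x (A.bk y z) - (A.bk (A.bk x y) z + A.bk y (A.bk x z)) =
      A.bk x (A.bk y z) + -A.bk y (A.bk x z) + (-1:ℂ) • A.bk (A.bk x y) z := by module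
  rw [← sub_eq_zero, this, j]

end jac

end LieSuperAlg

/-- There is no non-degenerate naturally graded filiform Lie superalgebra with
`dim g₀ = n + 1`, `dim g₁ = m` and `n > 2m`. -/
theorem stmt6 {V : Type*} [AddCommGroup V] [Module ℂ V] [FiniteDimensional ℂ V] (A : LieSuperAlg V) (n m : ℕ)
    (hfil : A.IsFiliform n m) (hnd : A.NonDegenerate) (hng : A.NaturallyGraded)
    (h : 2 * m < n) : False := by
  obtain ⟨-, hd0, hd1, hC0n1, hC1m1, hC0n, hC1m⟩ := hfil
  obtain ⟨W, hW0, hdec, hdisj, hbr⟩ := hng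
  obtain ⟨u, hu1, v0, hv01, hbuv⟩ := hnd
  have hm : 1 ≤ m := by
    rcases Nat.eq_zero_or_pos m with hm0 | hm0
    · exact absurd (by simpa [hm0] using hC1m) (by simpa [hm0] using hC1m1)
    · exact hm0
  have hn3 : 3 ≤ n := by omega
  have hW1bot : ∀ j, m < j → W 1 j = ⊥ := by
    intro j hj
    have h1 : W 1 j ≤ A.C 1 (j-1) := by
      have := A.W_le_C W hdec 1 (j-1)
      rwa [show j - 1 + 1 = j by omega] at this
    have h2 : A.C 1 (j-1) ≤ A.C 1 m := A.C_anti W hdec 1 (by omega)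
    rw [← le_bot_iff, ← hC1m]; exact le_trans h1 h2
  have hWne : ∀ i, 1 ≤ i → i ≤ n → W 0 i ≠ ⊥ := by
    intro i h1 h2 hbot
    have hstab : A.C 0 ((i-1)+1) = A.C 0 (i-1) := by
      have hh := hdec 0 (i-1)
      rw [show i - 1 + 1 = i by omega] at hh ⊢
      rw [hbot, bot_sup_eq] at hh
      exact hh.symm
    have h3 := A.C_stab 0 (i-1) hstab (n - (i-1))
    rw [show i - 1 + (n - (i-1)) = n by omega] at h3
    have h4 : A.C 0 (n-1) ≤ A.C 0 (i-1) := A.C_anti W hdec 0 (by omega)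
    rw [← h3, hC0n] at h4
    exact hC0n1 (le_bot_iff.mp h4)
  have hpos : ∀ i, 1 ≤ i → i ≤ n → 0 < Module.finrank ℂ (W 0 i) := by
    intro i h1 h2
    rw [Module.finrank_pos_iff]
    exact Submodule.nontrivial_iff_ne_bot.mpr (hWne i h1 h2)
  have hsum : (∑ i ∈ Finset.range n, Module.finrank ℂ (W 0 (i+1))) = n + 1 := by
    have hh := A.finrank_C W hdec hdisj 0 n
    rw [LieSuperAlg.C_zero, hd0, hC0n, finrank_bot] at hh
    omega
  have hd1ge : 2 ≤ Module.finrank ℂ (W 0 1) := by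
    by_contra hlt
    have he1 : Module.finrank ℂ (W 0 1) = 1 := by have := hpos 1 le_rfl (by omega); omega
    obtain ⟨u0, hu0, hu0ne⟩ := (Submodule.ne_bot_iff _).mp (hWne 1 le_rfl (by omega))
    have hspan : W 0 1 = Submodule.span ℂ {u0} := by
      refine (Submodule.eq_of_le_of_finrank_le
        ((Submodule.span_singleton_le_iff_mem u0 _).mpr hu0) ?_).symm
      rw [he1, finrank_span_singleton hu0ne]
    have hBr : Submodule.span ℂ {z | ∃ x ∈ W 0 1, ∃ w ∈ W 0 1, z = A.bk x w} = ⊥ := by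
      rw [Submodule.span_eq_bot]
      rintro z ⟨x, hx, w, hw, rfl⟩
      rw [hspan] at hx hw
      obtain ⟨a, rfl⟩ := Submodule.mem_span_singleton.mp hx
      obtain ⟨b, rfl⟩ := Submodule.mem_span_singleton.mp hw
      simp [A.bk_self u0 (A.W_le_g W hdec hW0 0 1 hu0)]
    have hgen := A.gen W hdec hbr n 1 hC0n le_rfl (by omega)
    rw [hBr, bot_sup_eq] at hgen
    have hW2 : W 0 2 = ⊥ := by
      rw [← hdisj 0 1]
      exact le_antisymm (le_inf le_rfl (le_trans (A.W_le_C W hdec 0 1) hgen)) inf_le_left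
    exact hWne 2 (by omega) (by omega) hW2
  have hdim1 : ∀ s, 2 ≤ s → s ≤ n → Module.finrank ℂ (W 0 s) = 1 := by
    intro s hs2 hsn
    have h0 : (0:ℕ) ∈ Finset.range n := Finset.mem_range.mpr (by omega)
    have hs1 : s - 1 ∈ (Finset.range n).erase 0 :=
      Finset.mem_erase.mpr ⟨by omega, Finset.mem_range.mpr (by omega)⟩
    have e1 := Finset.add_sum_erase (Finset.range n)
      (fun i => Module.finrank ℂ (W 0 (i+1))) h0
    have e2 := Finset.add_sum_erase ((Finset.range n).erase 0)
      (fun i => Module.finrank ℂ (W 0 (i+1))) hs1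
    rw [show (0:ℕ) + 1 = 1 from rfl] at e1
    rw [show s - 1 + 1 = s by omega] at e2
    have hrest : (((Finset.range n).erase 0).erase (s-1)).card ≤
        ∑ i ∈ ((Finset.range n).erase 0).erase (s-1), Module.finrank ℂ (W 0 (i+1)) := by
      have hb := Finset.card_nsmul_le_sum (((Finset.range n).erase 0).erase (s-1))
        (fun i => Module.finrank ℂ (W 0 (i+1))) 1 ?_
      · simpa using hb
      · intro i hi
        have hi1 : i ∈ Finset.range n := Finset.mem_of_mem_erase (Finset.mem_of_mem_erase hi)
        exact hpos (i+1) (by omega) (by have := Finset.mem_range.mp hi1; omega)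
    have hcard : (((Finset.range n).erase 0).erase (s-1)).card = n - 2 := by
      rw [Finset.card_erase_of_mem hs1, Finset.card_erase_of_mem h0, Finset.card_range]; omega
    rw [hcard] at hrest
    have hps := hpos s (by omega) hsn
    omega
  have van : ∀ t j k, 2*m+1 ≤ j+k+t → ∀ y ∈ W 1 j, ∀ z ∈ W 1 k, A.bk y z = 0 := by
    intro t
    induction t with
    | zero =>
      intro j k hjk y hy z hz
      rcases (by omega : m < j ∨ m < k) with hc | hc
      · rw [hW1bot j hc] at hy; rw [(Submodule.mem_bot ℂ).mp hy]; simp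
      · rw [hW1bot k hc] at hz; rw [(Submodule.mem_bot ℂ).mp hz]; simp
    | succ t ih =>
      intro j k hjk y hy z hz
      by_cases hjk' : 2*m+1 ≤ j + k + t
      · exact ih j k hjk' y hy z hz
      rcases Nat.eq_zero_or_pos j with rfl | hj
      · rw [hW0 1] at hy; rw [(Submodule.mem_bot ℂ).mp hy]; simp
      rcases Nat.eq_zero_or_pos k with rfl | hk
      · rw [hW0 1] at hz; rw [(Submodule.mem_bot ℂ).mp hz]; simp
      rcases Nat.lt_or_ge m j with hc | hjm
      · rw [hW1bot j hc] at hy; rw [(Submodule.mem_bot ℂ).mp hy]; simp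
      rcases Nat.lt_or_ge m k with hc | hkm
      · rw [hW1bot k hc] at hz; rw [(Submodule.mem_bot ℂ).mp hz]; simp
      by_contra hvne
      have hy1 : y ∈ A.g 1 := A.W_le_g W hdec hW0 1 j hy
      have hz1 : z ∈ A.g 1 := A.W_le_g W hdec hW0 1 k hz
      have hv : A.bk y z ∈ W 0 (j+k) := by
        have hh := hbr 1 1 j k y hy z hz
        rwa [show ((1:ZMod 2)+1) = 0 by decide] at hh
      have hWs : W 0 (j+k) = Submodule.span ℂ {A.bk y z} := by
        refine (Submodule.eq_of_le_of_finrank_le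
          ((Submodule.span_singleton_le_iff_mem _ _).mpr hv) ?_).symm
        rw [finrank_span_singleton hvne, hdim1 (j+k) (by omega) (by omega)]
      have hxv : ∀ x ∈ W 0 1, A.bk x (A.bk y z) = 0 := by
        intro x hx
        rw [A.jacobi_oo x y z (A.W_le_g W hdec hW0 0 1 hx) hy1 hz1]
        have h1 : A.bk x y ∈ W 1 (1+j) := by
          have hh := hbr 0 1 1 j x hx y hy
          rwa [show ((0:ZMod 2)+1) = 1 by decide] at hh
        have h2 : A.bk x z ∈ W 1 (1+k) := by
          have hh := hbr 0 1 1 k x hx z hz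
          rwa [show ((0:ZMod 2)+1) = 1 by decide] at hh
        rw [ih (1+j) k (by omega) _ h1 z hz, ih j (1+k) (by omega) y hy _ h2, add_zero]
      have hBr : Submodule.span ℂ {w | ∃ x ∈ W 0 1, ∃ w' ∈ W 0 (j+k), w = A.bk x w'} = ⊥ := by
        rw [Submodule.span_eq_bot]
        rintro w ⟨x, hx, w', hw', rfl⟩
        rw [hWs] at hw'
        obtain ⟨c, rfl⟩ := Submodule.mem_span_singleton.mp hw'
        rw [map_smul, hxv x hx, smul_zero]
      have hgen := A.gen W hdec hbr n (j+k) hC0n (by omega) (by omega)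
      rw [hBr, bot_sup_eq] at hgen
      have hWs1 : W 0 (j+k+1) = ⊥ := by
        rw [← hdisj 0 (j+k)]
        exact le_antisymm (le_inf le_rfl (le_trans (A.W_le_C W hdec 0 (j+k)) hgen)) inf_le_left
      exact hWne (j+k+1) (by omega) (by omega) hWs1
  have step1 : ∀ j, 1 ≤ j → ∀ y ∈ W 1 j, ∀ z ∈ A.g 1, A.bk y z = 0 := by
    intro j hj y hy z hz
    have hle : A.C 1 0 ≤ LinearMap.ker (A.bk y) := by
      refine A.C_le_of_W_le W hdec 1 m 0 hC1m (Nat.zero_le m) _ ?_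
      intro t ht z' hz'
      exact LinearMap.mem_ker.mpr (van (2*m+1) j t (by omega) y hy z' hz')
    exact LinearMap.mem_ker.mp (hle hz)
  have hfinal : A.bk u v0 = 0 := by
    have hle : A.C 1 0 ≤ LinearMap.ker (A.bk.flip v0) := by
      refine A.C_le_of_W_le W hdec 1 m 0 hC1m (Nat.zero_le m) _ ?_
      intro t ht y hy
      exact LinearMap.mem_ker.mpr (step1 t (by omega) y hy v0 hv01)
    simpa using LinearMap.mem_ker.mp (hle hu1)
  exact hbuv hfinal
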